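/- With the lower-bound construction below, for every i ∈ [n], every choice of a ∈ ∏_{v=1}^k T_{2i−1}^v and b ∈ ∏_{v=1}^k T_{2i}^v, and every j ∈ [n] with j ≠ i: d_TV(P_{i,a,b}, H_j) = k(3+β)/d. Consequently, d_TV(P_{i,a,b}, H_j) / d_TV(P_{i,a,b}, H_i) = (3+β)/(1+β) ≥ 3 − 2β. (Distance-ratio computation in the proof of Theorem 3.6, showing approximation factor nearly 3 for all non-optimal hypotheses.) -/

import Mathlib

/-!
Outside `T_{2i} ∪ T_{2i+1}` the hypothesis `H_i` is uniform, so for `j ≠ i` the deviations of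
`H_i` and `H_j` from the uniform distribution live on disjoint sets and
`‖H_i - H_j‖₁ = 4kℓβ/d`. The distribution `P_{i,a,b}` differs from `H_i` only at the `2k`
points `a_v, b_v`, where `|P - H_j| = 1/d` and `|H_i - H_j| = β/d`. Hence
`‖P - H_j‖₁ = 4kℓβ/d + 2k(1 - β)/d = 2k(3 + β)/d`, using `ℓβ = 1 + β`, while
`‖P - H_i‖₁ = 2k(1 + β)/d`.
-/

/-- The block `T_u^v` (0-indexed: `u ∈ {0,…,2n−1}`, `v ∈ {0,…,k−1}`): the `ℓ`
consecutive domain elements `{u·kℓ + v·ℓ, …, u·kℓ + (v+1)·ℓ − 1}` of `{0,…,d−1}`. -/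
def Tblk (k ℓ u v : ℕ) : Finset ℕ :=
  Finset.Ico (u * (k * ℓ) + v * ℓ) (u * (k * ℓ) + (v + 1) * ℓ)

/-- The hypothesis `H_i` (0-indexed `i ∈ {0,…,n−1}`) of the lower-bound construction:
mass `(1+β)/d` on `T_{2i}`, mass `(1−β)/d` on `T_{2i+1}`, and `1/d` elsewhere, where
`d = 2nkℓ` and `β = 1/(ℓ−1)`. -/
noncomputable def Hhyp (n k ℓ i x : ℕ) : ℝ :=
  if 2 * i * (k * ℓ) ≤ x ∧ x < (2 * i + 1) * (k * ℓ) then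
    (1 + 1 / ((ℓ : ℝ) - 1)) / (2 * n * k * ℓ)
  else if (2 * i + 1) * (k * ℓ) ≤ x ∧ x < (2 * i + 2) * (k * ℓ) then
    (1 - 1 / ((ℓ : ℝ) - 1)) / (2 * n * k * ℓ)
  else 1 / (2 * (n : ℝ) * k * ℓ)

/-- The true distribution `P_{i,a,b}` of the lower-bound construction, where for each
`v < k`, `a v ∈ T_{2i}^v` is the zero-mass element and `b v ∈ T_{2i+1}^v` is the
element of mass `2/d`; elsewhere `P_{i,a,b}` agrees with `H_i`. -/
noncomputable def Pdist (n k ℓ i : ℕ) (a b : Fin k → ℕ) (x : ℕ) : ℝ :=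
  if ∃ v : Fin k, a v = x then 0
  else if ∃ v : Fin k, b v = x then 2 / (2 * (n : ℝ) * k * ℓ)
  else Hhyp n k ℓ i x

open Finset

theorem Finset.sum_eq_sum_add_sum_sub_of_subset {ι M : Type*} [AddCommGroup M]
    {s t : Finset ι} {f g : ι → M} (hts : t ⊆ s) (hfg : ∀ x ∈ s, x ∉ t → f x = g x) :
    ∑ x ∈ s, f x = ∑ x ∈ s, g x + ∑ x ∈ t, (f x - g x) := by
  rw [sum_subset hts fun x hxs hxt => sub_eq_zero.2 (hfg x hxs hxt), sum_sub_distrib,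
    add_sub_cancel]

section Blocks

variable {n k ℓ i x : ℕ}

theorem Tblk_subset_Ico (u : ℕ) {v : ℕ} (hv : v < k) :
    Tblk k ℓ u v ⊆ Ico (u * (k * ℓ)) ((u + 1) * (k * ℓ)) := by
  have : (v + 1) * ℓ ≤ k * ℓ := Nat.mul_le_mul_right ℓ hv
  intro x hx
  rw [Tblk, mem_Ico] at hx
  rw [mem_Ico, add_one_mul]
  omega

theorem injective_of_forall_mem_Tblk {u : ℕ} {f : Fin k → ℕ}
    (hf : ∀ v : Fin k, f v ∈ Tblk k ℓ u v) : Function.Injective f := by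
  intro v w hvw
  have hv := hf v
  have hw := hf w
  rw [hvw, Tblk, mem_Ico] at hv
  rw [Tblk, mem_Ico] at hw
  by_contra hne
  rcases Nat.lt_or_gt_of_ne (Fin.val_ne_of_ne hne) with h | h
  · have : ((v : ℕ) + 1) * ℓ ≤ w * ℓ := Nat.mul_le_mul_right ℓ h
    omega
  · have : ((w : ℕ) + 1) * ℓ ≤ v * ℓ := Nat.mul_le_mul_right ℓ h
    omega

theorem apply_mem_Ico_of_forall_mem_Tblk {u : ℕ} {f : Fin k → ℕ}
    (hf : ∀ v : Fin k, f v ∈ Tblk k ℓ u v) (v : Fin k) :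
    f v ∈ Ico (u * (k * ℓ)) ((u + 1) * (k * ℓ)) :=
  Tblk_subset_Ico u v.isLt (hf v)

theorem ne_of_forall_mem_Tblk_succ {u : ℕ} {f g : Fin k → ℕ}
    (hf : ∀ v : Fin k, f v ∈ Tblk k ℓ u v) (hg : ∀ v : Fin k, g v ∈ Tblk k ℓ (u + 1) v)
    (v w : Fin k) : f v ≠ g w := by
  have := mem_Ico.1 (apply_mem_Ico_of_forall_mem_Tblk hf v)
  have := mem_Ico.1 (apply_mem_Ico_of_forall_mem_Tblk hg w)
  omega

/-- `T_{2i} ∪ T_{2i+1}`. -/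
def hypBlock (k ℓ i : ℕ) : Finset ℕ := Ico (2 * i * (k * ℓ)) ((2 * i + 2) * (k * ℓ))

theorem card_hypBlock : #(hypBlock k ℓ i) = 2 * (k * ℓ) := by
  rw [hypBlock, Nat.card_Ico, add_mul, Nat.add_sub_cancel_left]

theorem hypBlock_subset_range (hi : i < n) : hypBlock k ℓ i ⊆ range (2 * n * k * ℓ) := by
  have : (2 * i + 2) * (k * ℓ) ≤ 2 * n * (k * ℓ) := Nat.mul_le_mul_right _ (by omega)
  intro x hx
  rw [hypBlock, mem_Ico] at hx
  rw [mem_range, mul_assoc (2 * n)]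
  omega

theorem disjoint_hypBlock {j : ℕ} (hij : i ≠ j) : Disjoint (hypBlock k ℓ i) (hypBlock k ℓ j) := by
  refine disjoint_left.2 fun x hxi hxj => ?_
  rw [hypBlock, mem_Ico] at hxi hxj
  rcases Nat.lt_or_gt_of_ne hij with h | h
  · have : (2 * i + 2) * (k * ℓ) ≤ 2 * j * (k * ℓ) := Nat.mul_le_mul_right _ (by omega)
    omega
  · have : (2 * j + 2) * (k * ℓ) ≤ 2 * i * (k * ℓ) := Nat.mul_le_mul_right _ (by omega)
    omega

theorem Ico_left_subset_hypBlock :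
    Ico (2 * i * (k * ℓ)) ((2 * i + 1) * (k * ℓ)) ⊆ hypBlock k ℓ i :=
  Ico_subset_Ico le_rfl (Nat.mul_le_mul_right _ (by omega))

theorem Ico_right_subset_hypBlock :
    Ico ((2 * i + 1) * (k * ℓ)) ((2 * i + 2) * (k * ℓ)) ⊆ hypBlock k ℓ i :=
  Ico_subset_Ico (Nat.mul_le_mul_right _ (by omega)) le_rfl

theorem Hhyp_of_mem_Ico_left (hx : x ∈ Ico (2 * i * (k * ℓ)) ((2 * i + 1) * (k * ℓ))) :
    Hhyp n k ℓ i x = (1 + 1 / ((ℓ : ℝ) - 1)) / (2 * n * k * ℓ) :=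
  if_pos (mem_Ico.1 hx)

theorem Hhyp_of_mem_Ico_right (hx : x ∈ Ico ((2 * i + 1) * (k * ℓ)) ((2 * i + 2) * (k * ℓ))) :
    Hhyp n k ℓ i x = (1 - 1 / ((ℓ : ℝ) - 1)) / (2 * n * k * ℓ) := by
  rw [mem_Ico] at hx
  rw [Hhyp, if_neg (by omega), if_pos hx]

theorem Hhyp_of_notMem_hypBlock (hx : x ∉ hypBlock k ℓ i) :
    Hhyp n k ℓ i x = 1 / (2 * n * k * ℓ) := by
  have : 2 * i * (k * ℓ) ≤ (2 * i + 1) * (k * ℓ) := Nat.mul_le_mul_right _ (by omega)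
  have : (2 * i + 1) * (k * ℓ) ≤ (2 * i + 2) * (k * ℓ) := Nat.mul_le_mul_right _ (by omega)
  rw [hypBlock, mem_Ico] at hx
  rw [Hhyp, if_neg (by omega), if_neg (by omega)]

theorem abs_Hhyp_sub_uniform_of_mem_hypBlock (hx : x ∈ hypBlock k ℓ i) :
    |Hhyp n k ℓ i x - 1 / (2 * n * k * ℓ)| = |1 / ((ℓ : ℝ) - 1)| / (2 * n * k * ℓ) := by
  have hD : (0 : ℝ) ≤ 2 * n * k * ℓ := by positivity
  rw [hypBlock, mem_Ico] at hx
  rcases lt_or_ge x ((2 * i + 1) * (k * ℓ)) with h | h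
  · rw [Hhyp_of_mem_Ico_left (mem_Ico.2 ⟨hx.1, h⟩), div_sub_div_same, add_sub_cancel_left,
      abs_div, abs_of_nonneg hD]
  · rw [Hhyp_of_mem_Ico_right (mem_Ico.2 ⟨h, hx.2⟩), div_sub_div_same, sub_sub_cancel_left,
      abs_div, abs_neg, abs_of_nonneg hD]

theorem sum_abs_Hhyp_sub_uniform (hi : i < n) :
    ∑ x ∈ range (2 * n * k * ℓ), |Hhyp n k ℓ i x - 1 / (2 * n * k * ℓ)|
      = 2 * k * ℓ * (|1 / ((ℓ : ℝ) - 1)| / (2 * n * k * ℓ)) := by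
  rw [← sum_subset (hypBlock_subset_range hi) fun x _ hx => by
      rw [Hhyp_of_notMem_hypBlock hx, sub_self, abs_zero],
    sum_congr rfl fun x hx => abs_Hhyp_sub_uniform_of_mem_hypBlock hx, sum_const, card_hypBlock,
    nsmul_eq_mul]
  push_cast
  ring

theorem abs_Hhyp_sub_Hhyp {j : ℕ} (hij : i ≠ j) (x : ℕ) :
    |Hhyp n k ℓ i x - Hhyp n k ℓ j x|
      = |Hhyp n k ℓ i x - 1 / (2 * n * k * ℓ)| + |Hhyp n k ℓ j x - 1 / (2 * n * k * ℓ)| := by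
  by_cases hx : x ∈ hypBlock k ℓ i
  · rw [Hhyp_of_notMem_hypBlock (disjoint_left.1 (disjoint_hypBlock hij) hx), sub_self,
      abs_zero, add_zero]
  · rw [Hhyp_of_notMem_hypBlock hx, sub_self, abs_zero, zero_add, abs_sub_comm]

theorem sum_abs_Hhyp_sub_Hhyp {j : ℕ} (hi : i < n) (hj : j < n) (hij : i ≠ j) :
    ∑ x ∈ range (2 * n * k * ℓ), |Hhyp n k ℓ i x - Hhyp n k ℓ j x|
      = 4 * k * ℓ * (|1 / ((ℓ : ℝ) - 1)| / (2 * n * k * ℓ)) := by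
  rw [sum_congr rfl fun x _ => abs_Hhyp_sub_Hhyp hij x, sum_add_distrib,
    sum_abs_Hhyp_sub_uniform hi, sum_abs_Hhyp_sub_uniform hj]
  ring

end Blocks

theorem Finset.sum_image_union_image {ι α M : Type*} [Fintype ι] [DecidableEq α]
    [AddCommMonoid M] {a b : ι → α} (ha : Function.Injective a) (hb : Function.Injective b)
    (hab : ∀ v w, a v ≠ b w) (f : α → M) :
    ∑ x ∈ univ.image a ∪ univ.image b, f x = ∑ v, (f (a v) + f (b v)) := by
  have hdisj : Disjoint (univ.image a) (univ.image b) := by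
    simp only [disjoint_left, mem_image, mem_univ, true_and, not_exists, forall_exists_index,
      forall_apply_eq_imp_iff]
    exact fun v w => (hab v w).symm
  rw [sum_union hdisj, sum_image ha.injOn, sum_image hb.injOn, sum_add_distrib]

section Perturbation

variable {n k ℓ i : ℕ} {a b : Fin k → ℕ}

theorem Pdist_apply_left (v : Fin k) : Pdist n k ℓ i a b (a v) = 0 := if_pos ⟨v, rfl⟩

theorem Pdist_apply_right {v : Fin k} (hv : ∀ w, a w ≠ b v) :
    Pdist n k ℓ i a b (b v) = 2 / (2 * n * k * ℓ) := by
  rw [Pdist, if_neg (not_exists.2 hv), if_pos ⟨v, rfl⟩]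

theorem Pdist_eq_Hhyp_of_notMem {x : ℕ} (hx : x ∉ univ.image a ∪ univ.image b) :
    Pdist n k ℓ i a b x = Hhyp n k ℓ i x := by
  simp only [mem_union, mem_image, mem_univ, true_and, not_or] at hx
  rw [Pdist, if_neg hx.1, if_neg hx.2]

theorem image_union_image_subset_range (hi : i < n)
    (ha : ∀ v : Fin k, a v ∈ Tblk k ℓ (2 * i) v)
    (hb : ∀ v : Fin k, b v ∈ Tblk k ℓ (2 * i + 1) v) :
    univ.image a ∪ univ.image b ⊆ range (2 * n * k * ℓ) :=
  union_subset
    (image_subset_iff.2 fun v _ => hypBlock_subset_range hi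
      (Ico_left_subset_hypBlock (apply_mem_Ico_of_forall_mem_Tblk ha v)))
    (image_subset_iff.2 fun v _ => hypBlock_subset_range hi
      (Ico_right_subset_hypBlock (apply_mem_Ico_of_forall_mem_Tblk hb v)))

theorem sum_abs_Pdist_sub (hi : i < n) (ha : ∀ v : Fin k, a v ∈ Tblk k ℓ (2 * i) v)
    (hb : ∀ v : Fin k, b v ∈ Tblk k ℓ (2 * i + 1) v) (g : ℕ → ℝ) :
    ∑ x ∈ range (2 * n * k * ℓ), |Pdist n k ℓ i a b x - g x|
      = ∑ x ∈ range (2 * n * k * ℓ), |Hhyp n k ℓ i x - g x|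
        + ∑ v, (|Pdist n k ℓ i a b (a v) - g (a v)| - |Hhyp n k ℓ i (a v) - g (a v)|
          + (|Pdist n k ℓ i a b (b v) - g (b v)| - |Hhyp n k ℓ i (b v) - g (b v)|)) := by
  rw [sum_eq_sum_add_sum_sub_of_subset (image_union_image_subset_range hi ha hb)
      fun x _ hx => by rw [Pdist_eq_Hhyp_of_notMem hx],
    sum_image_union_image (injective_of_forall_mem_Tblk ha) (injective_of_forall_mem_Tblk hb)
      (ne_of_forall_mem_Tblk_succ ha hb)]

theorem sum_abs_Pdist_sub_Hhyp_self (hi : i < n)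
    (ha : ∀ v : Fin k, a v ∈ Tblk k ℓ (2 * i) v)
    (hb : ∀ v : Fin k, b v ∈ Tblk k ℓ (2 * i + 1) v) :
    ∑ x ∈ range (2 * n * k * ℓ), |Pdist n k ℓ i a b x - Hhyp n k ℓ i x|
      = 2 * k * (|1 + 1 / ((ℓ : ℝ) - 1)| / (2 * n * k * ℓ)) := by
  have hD : (0 : ℝ) ≤ 2 * n * k * ℓ := by positivity
  rw [sum_abs_Pdist_sub hi ha hb]
  simp only [sub_self, abs_zero, sum_const_zero, zero_add, sub_zero, Pdist_apply_left,
    Pdist_apply_right (fun w => ne_of_forall_mem_Tblk_succ ha hb w _),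
    Hhyp_of_mem_Ico_left (apply_mem_Ico_of_forall_mem_Tblk ha _),
    Hhyp_of_mem_Ico_right (apply_mem_Ico_of_forall_mem_Tblk hb _), sum_const, card_univ,
    Fintype.card_fin, nsmul_eq_mul]
  rw [zero_sub, abs_neg, div_sub_div_same, abs_div, abs_div, abs_of_nonneg hD]
  ring_nf

theorem sum_abs_Pdist_sub_Hhyp_of_ne {j : ℕ} (hi : i < n) (hj : j < n) (hij : i ≠ j)
    (ha : ∀ v : Fin k, a v ∈ Tblk k ℓ (2 * i) v)
    (hb : ∀ v : Fin k, b v ∈ Tblk k ℓ (2 * i + 1) v) :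
    ∑ x ∈ range (2 * n * k * ℓ), |Pdist n k ℓ i a b x - Hhyp n k ℓ j x|
      = 4 * k * ℓ * (|1 / ((ℓ : ℝ) - 1)| / (2 * n * k * ℓ))
        + 2 * k * ((1 - |1 / ((ℓ : ℝ) - 1)|) / (2 * n * k * ℓ)) := by
  have hD : (0 : ℝ) ≤ 2 * n * k * ℓ := by positivity
  have ha_j (v : Fin k) : a v ∉ hypBlock k ℓ j := disjoint_left.1 (disjoint_hypBlock hij)
    (Ico_left_subset_hypBlock (apply_mem_Ico_of_forall_mem_Tblk ha v))
  have hb_j (v : Fin k) : b v ∉ hypBlock k ℓ j := disjoint_left.1 (disjoint_hypBlock hij)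
    (Ico_right_subset_hypBlock (apply_mem_Ico_of_forall_mem_Tblk hb v))
  rw [sum_abs_Pdist_sub hi ha hb, sum_abs_Hhyp_sub_Hhyp hi hj hij]
  simp only [Pdist_apply_left, Pdist_apply_right (fun w => ne_of_forall_mem_Tblk_succ ha hb w _),
    Hhyp_of_mem_Ico_left (apply_mem_Ico_of_forall_mem_Tblk ha _),
    Hhyp_of_mem_Ico_right (apply_mem_Ico_of_forall_mem_Tblk hb _),
    Hhyp_of_notMem_hypBlock (ha_j _), Hhyp_of_notMem_hypBlock (hb_j _), sum_const,
    card_univ, Fintype.card_fin, nsmul_eq_mul]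
  simp only [zero_sub, abs_neg, div_sub_div_same, abs_div, abs_of_nonneg hD,
    add_sub_cancel_left, sub_sub_cancel_left]
  norm_num
  ring

end Perturbation

theorem three_sub_two_mul_le_div {β : ℝ} (hβ : 0 ≤ β) : 3 - 2 * β ≤ (3 + β) / (1 + β) := by
  rw [le_div_iff₀ (by linarith)]
  nlinarith [sq_nonneg β]

theorem lower_bound_distance_to_other_hypotheses
    (n k ℓ : ℕ) (hk : 1 ≤ k) (hℓ : 2 ≤ ℓ)
    (i j : ℕ) (hi : i < n) (hj : j < n) (hij : j ≠ i) (a b : Fin k → ℕ)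
    (ha : ∀ v : Fin k, a v ∈ Tblk k ℓ (2 * i) v)
    (hb : ∀ v : Fin k, b v ∈ Tblk k ℓ (2 * i + 1) v) :
    ((1 / 2) * ∑ x ∈ Finset.range (2 * n * k * ℓ), |Pdist n k ℓ i a b x - Hhyp n k ℓ j x|
      = (k : ℝ) * (3 + 1 / ((ℓ : ℝ) - 1)) / (2 * n * k * ℓ)) ∧
    (((1 / 2) * ∑ x ∈ Finset.range (2 * n * k * ℓ),
          |Pdist n k ℓ i a b x - Hhyp n k ℓ j x|) /
        ((1 / 2) * ∑ x ∈ Finset.range (2 * n * k * ℓ),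
          |Pdist n k ℓ i a b x - Hhyp n k ℓ i x|)
      = (3 + 1 / ((ℓ : ℝ) - 1)) / (1 + 1 / ((ℓ : ℝ) - 1))) ∧
    (3 - 2 * (1 / ((ℓ : ℝ) - 1))
      ≤ (3 + 1 / ((ℓ : ℝ) - 1)) / (1 + 1 / ((ℓ : ℝ) - 1))) := by
  have hℓ_sub : (0 : ℝ) < ℓ - 1 := by
    rw [sub_pos]
    exact_mod_cast hℓ
  have hβ : 0 < 1 / ((ℓ : ℝ) - 1) := one_div_pos.2 hℓ_sub
  have hn_pos : (0 : ℝ) < n := Nat.cast_pos.2 (Nat.zero_lt_of_lt hi)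
  have hk_pos : (0 : ℝ) < k := Nat.cast_pos.2 hk
  have hD : (0 : ℝ) < 2 * n * k * ℓ := by positivity
  have hdist_j : (1 / 2) * ∑ x ∈ range (2 * n * k * ℓ), |Pdist n k ℓ i a b x - Hhyp n k ℓ j x|
      = (k : ℝ) * (3 + 1 / ((ℓ : ℝ) - 1)) / (2 * n * k * ℓ) := by
    rw [sum_abs_Pdist_sub_Hhyp_of_ne hi hj hij.symm ha hb, abs_of_pos hβ]
    field_simp [hℓ_sub.ne']
    ring
  have hdist_i : (1 / 2) * ∑ x ∈ range (2 * n * k * ℓ), |Pdist n k ℓ i a b x - Hhyp n k ℓ i x|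
      = (k : ℝ) * (1 + 1 / ((ℓ : ℝ) - 1)) / (2 * n * k * ℓ) := by
    rw [sum_abs_Pdist_sub_Hhyp_self hi ha hb, abs_of_pos (by linarith)]
    ring
  refine ⟨hdist_j, ?_, three_sub_two_mul_le_div hβ.le⟩
  rw [hdist_j, hdist_i]
  field_simp
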